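/- There is a ℂ-algebra isomorphism ℂ[[x, y, u]]/(y² - x³ - x², 2yu, (3x² + 2x)u) ≅ ℂ[[a, b, u]]/(ab, bu, ua) of complete local rings. -/

import Mathlib

open MvPowerSeries Finset

noncomputable section

namespace NodalCrit

abbrev R3 : Type := MvPowerSeries (Fin 3) ℂ

/-- total degree of an exponent -/
def deg (n : Fin 3 →₀ ℕ) : ℕ := ∑ i, n i

lemma deg_add (a b : Fin 3 →₀ ℕ) : deg (a + b) = deg a + deg b := by
  simp [deg, Finset.sum_add_distrib]

lemma deg_zero : deg 0 = 0 := by simp [deg]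

lemma deg_eq_zero {n : Fin 3 →₀ ℕ} : deg n = 0 ↔ n = 0 := by
  constructor
  · intro h
    ext i
    have h2 : ∀ x : Fin 3, n x = 0 := by simpa [deg] using h
    exact h2 i
  · rintro rfl; exact deg_zero

lemma deg_single (i : Fin 3) (k : ℕ) : deg (Finsupp.single i k) = k := by
  simp [deg, Finsupp.single_apply, Finset.sum_ite_eq' Finset.univ i]

lemma le_deg (n : Fin 3 →₀ ℕ) (i : Fin 3) : n i ≤ deg n :=
  Finset.single_le_sum (f := fun j => n j) (fun _ _ => Nat.zero_le _) (Finset.mem_univ i)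

lemma deg_mono {a b : Fin 3 →₀ ℕ} (h : a ≤ b) : deg a ≤ deg b :=
  Finset.sum_le_sum fun i _ => Finsupp.le_def.mp h i

lemma deg_tsub {a b : Fin 3 →₀ ℕ} (h : b ≤ a) : deg (a - b) = deg a - deg b := by
  have h2 : b + (a - b) = a := by
    ext i; simp [Nat.add_sub_cancel' (Finsupp.le_def.mp h i)]
  have := deg_add b (a - b)
  rw [h2] at this
  omega

/-- `OrdGe k f` : all coefficients of `f` in total degree `< k` vanish. -/
def OrdGe (k : ℕ) (f : R3) : Prop := ∀ n, deg n < k → coeff n f = 0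

lemma ordGe_zero (f : R3) : OrdGe 0 f := fun _ h => absurd h (Nat.not_lt_zero _)

lemma OrdGe.mono {k k'} {f : R3} (h : OrdGe k f) (hk : k' ≤ k) : OrdGe k' f :=
  fun n hn => h n (lt_of_lt_of_le hn hk)

lemma ordGe_one {f : R3} (h : constantCoeff f = 0) : OrdGe 1 f := by
  intro n hn
  have : n = 0 := deg_eq_zero.mp (by omega)
  subst this
  simpa [coeff_zero_eq_constantCoeff] using h

lemma OrdGe.add {k} {f g : R3} (hf : OrdGe k f) (hg : OrdGe k g) : OrdGe k (f + g) := by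
  intro n hn; simp [map_add, hf n hn, hg n hn]

lemma OrdGe.neg {k} {f : R3} (hf : OrdGe k f) : OrdGe k (-f) := by
  intro n hn; simp [hf n hn]

lemma OrdGe.sub {k} {f g : R3} (hf : OrdGe k f) (hg : OrdGe k g) : OrdGe k (f - g) := by
  intro n hn; simp [map_sub, hf n hn, hg n hn]

lemma OrdGe.mul {d k} {f g : R3} (hf : OrdGe d f) (hg : OrdGe k g) :
    OrdGe (d + k) (f * g) := by
  intro n hn
  classical
  rw [coeff_mul]
  refine Finset.sum_eq_zero ?_
  rintro ⟨i, j⟩ hij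
  have hij' : i + j = n := Finset.HasAntidiagonal.mem_antidiagonal.mp hij
  have hdij : deg i + deg j < d + k := by
    rw [← deg_add, hij']; exact hn
  rcases lt_or_ge (deg i) d with hi | hi
  · simp [hf i hi]
  · have : deg j < k := by omega
    simp [hg j this]

lemma OrdGe.pow {f : R3} (h : OrdGe 1 f) (b : ℕ) : OrdGe b (f ^ b) := by
  induction b with
  | zero => exact ordGe_zero _
  | succ b ih =>
      have := h.mul ih
      rw [pow_succ]
      simpa [Nat.add_comm] using ih.mul h

/-- the product `∏ i, g i ^ m i` -/
def Pg (g : Fin 3 → R3) (m : Fin 3 →₀ ℕ) : R3 := m.prod fun i k => g i ^ k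

lemma Pg_zero (g : Fin 3 → R3) : Pg g 0 = 1 := by simp [Pg]

lemma Pg_add (g : Fin 3 → R3) (a b : Fin 3 →₀ ℕ) : Pg g (a + b) = Pg g a * Pg g b := by
  simp [Pg, Finsupp.prod_add_index' (fun i => pow_zero (g i)) (fun i b₁ b₂ => pow_add (g i) b₁ b₂)]

lemma Pg_single (g : Fin 3 → R3) (a : Fin 3) (b : ℕ) : Pg g (Finsupp.single a b) = g a ^ b := by
  simp [Pg, Finsupp.prod_single_index (pow_zero (g a))]

lemma ordGe_Pg {g : Fin 3 → R3} (hg : ∀ i, constantCoeff (g i) = 0)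
    (m : Fin 3 →₀ ℕ) : OrdGe (deg m) (Pg g m) := by
  induction m using Finsupp.induction with
  | zero => rw [deg_zero]; exact ordGe_zero _
  | single_add a b f _ _ ih =>
      rw [Pg_add, Pg_single, deg_add, deg_single]
      exact ((ordGe_one (hg a)).pow b).mul ih

lemma Pg_X (m : Fin 3 →₀ ℕ) : Pg (fun i => (X i : R3)) m = monomial m 1 := by
  induction m using Finsupp.induction with
  | zero => simp [Pg_zero]
  | single_add a b f _ _ ih =>
      rw [Pg_add, Pg_single, ih, X_pow_eq, monomial_mul_monomial, one_mul]


/-- all exponents of total degree `< d` -/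
def DFin (d : ℕ) : Finset (Fin 3 →₀ ℕ) :=
  (Finset.Iic (Finsupp.equivFunOnFinite.symm fun _ => d)).filter fun m => deg m < d

lemma mem_DFin {d : ℕ} {m : Fin 3 →₀ ℕ} : m ∈ DFin d ↔ deg m < d := by
  constructor
  · intro h; exact (Finset.mem_filter.mp h).2
  · intro h
    refine Finset.mem_filter.mpr ⟨Finset.mem_Iic.mpr ?_, h⟩
    rw [Finsupp.le_def]
    intro i
    have := le_deg m i
    simp only [Finsupp.coe_equivFunOnFinite_symm]
    omega

lemma DFin_mono {d d' : ℕ} (h : d ≤ d') : DFin d ⊆ DFin d' := by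
  intro m hm
  rw [mem_DFin] at *
  omega

lemma DFin_one : DFin 1 = {0} := by
  ext m
  rw [mem_DFin, Finset.mem_singleton]
  constructor
  · intro h; exact deg_eq_zero.mp (by omega)
  · rintro rfl; simp [deg_zero]

/-- truncation below total degree `d`, as a polynomial -/
def truncD (d : ℕ) (f : R3) : MvPolynomial (Fin 3) ℂ :=
  ∑ m ∈ DFin d, MvPolynomial.monomial m (coeff m f)

lemma coeff_truncD (d : ℕ) (f : R3) (m : Fin 3 →₀ ℕ) :
    (truncD d f).coeff m = if deg m < d then coeff m f else 0 := by
  classical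
  rw [truncD, MvPolynomial.coeff_sum]
  simp only [MvPolynomial.coeff_monomial]
  rw [Finset.sum_ite_eq' (DFin d) m]
  simp [mem_DFin]

/-- Master formula : coefficient of `aeval g p` below degree `d`. -/
lemma coeff_aeval {g : Fin 3 → R3} (hg : ∀ i, constantCoeff (g i) = 0)
    (p : MvPolynomial (Fin 3) ℂ) {n : Fin 3 →₀ ℕ} {d : ℕ} (hd : deg n < d) :
    coeff n (MvPolynomial.aeval g p) = ∑ m ∈ DFin d, p.coeff m * coeff n (Pg g m) := by
  classical
  conv_lhs => rw [p.as_sum]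
  rw [map_sum, map_sum]
  have hterm : ∀ m, coeff n (MvPolynomial.aeval g (MvPolynomial.monomial m (p.coeff m)))
      = p.coeff m * coeff n (Pg g m) := by
    intro m
    rw [MvPolynomial.aeval_monomial]
    have halg : (algebraMap ℂ R3) (p.coeff m) = C (p.coeff m) := rfl
    rw [halg]
    change coeff n (C (p.coeff m) * Pg g m) = _
    rw [← smul_eq_C_mul, map_smul, smul_eq_mul]
  simp only [hterm]
  -- compare sums over `p.support` and `DFin d`
  rw [← Finset.sum_subset (Finset.inter_subset_left (s₂ := DFin d)) (by
      intro m hm hnot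
      have hms : m ∈ p.support := hm
      have : m ∉ DFin d := fun hmd => hnot (Finset.mem_inter.mpr ⟨hm, hmd⟩)
      rw [mem_DFin] at this
      have : coeff n (Pg g m) = 0 := ordGe_Pg hg m n (by omega)
      simp [this])]
  rw [← Finset.sum_subset (Finset.inter_subset_right (s₁ := p.support) (s₂ := DFin d)) (by
      intro m hm hnot
      have : m ∉ p.support := fun hms => hnot (Finset.mem_inter.mpr ⟨hms, hm⟩)
      rw [MvPolynomial.notMem_support_iff] at this
      simp [this])]


/-- The substitution map: substitute `g i` for the `i`-th variable. -/
def phiFun (g : Fin 3 → R3) (f : R3) : R3 :=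
  fun n => ∑ m ∈ DFin (deg n + 1), coeff m f * coeff n (Pg g m)

lemma coeff_phiFun (g : Fin 3 → R3) (f : R3) (n : Fin 3 →₀ ℕ) :
    coeff n (phiFun g f) = ∑ m ∈ DFin (deg n + 1), coeff m f * coeff n (Pg g m) := rfl

/-- stability : the defining formula works with any degree bound `d > deg n`. -/
lemma coeff_phiFun_eq {g : Fin 3 → R3} (hg : ∀ i, constantCoeff (g i) = 0)
    (f : R3) {n : Fin 3 →₀ ℕ} {d : ℕ} (hd : deg n < d) :
    coeff n (phiFun g f) = coeff n (MvPolynomial.aeval g (truncD d f)) := by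
  rw [coeff_aeval hg _ hd, coeff_phiFun]
  rw [← Finset.sum_subset (DFin_mono (show deg n + 1 ≤ d by omega)) (by
    intro m hm hnot
    rw [mem_DFin] at hm hnot
    have : coeff n (Pg g m) = 0 := ordGe_Pg hg m n (by omega)
    simp [this])]
  refine Finset.sum_congr rfl ?_
  intro m hm
  rw [mem_DFin] at hm
  rw [coeff_truncD]
  rw [if_pos (by omega)]

lemma phiFun_add (g : Fin 3 → R3) (f f' : R3) :
    phiFun g (f + f') = phiFun g f + phiFun g f' := by
  apply MvPowerSeries.ext; intro n
  simp [coeff_phiFun, map_add, add_mul, Finset.sum_add_distrib]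

lemma phiFun_C (g : Fin 3 → R3) (c : ℂ) :
    phiFun g (C c) = C c := by
  apply MvPowerSeries.ext; intro n
  classical
  rw [coeff_phiFun]
  rw [Finset.sum_eq_single 0]
  · have h1 : coeff (0 : Fin 3 →₀ ℕ) (C c) = c := by simp
    rw [h1, Pg_zero, coeff_one, coeff_C]
    split_ifs <;> simp
  · intro m _ hm
    simp [coeff_C, hm]
  · intro h
    exact absurd (mem_DFin.mpr (by simp [deg_zero])) h

lemma phiFun_one (g : Fin 3 → R3) : phiFun g 1 = 1 := by
  have := phiFun_C g 1
  simpa using this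

lemma truncD_mul {d : ℕ} (f f' : R3) (m : Fin 3 →₀ ℕ) (hm : deg m < d) :
    (truncD d (f * f')).coeff m = (truncD d f * truncD d f').coeff m := by
  classical
  rw [coeff_truncD, if_pos hm, MvPowerSeries.coeff_mul, MvPolynomial.coeff_mul]
  refine Finset.sum_congr rfl ?_
  rintro ⟨i, j⟩ hij
  have hij' : i + j = m := Finset.HasAntidiagonal.mem_antidiagonal.mp hij
  have hi : deg i < d := by
    have := deg_add i j; rw [hij'] at this; omega
  have hj : deg j < d := by
    have := deg_add i j; rw [hij'] at this; omega
  rw [coeff_truncD, coeff_truncD, if_pos hi, if_pos hj]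

lemma phiFun_mul {g : Fin 3 → R3} (hg : ∀ i, constantCoeff (g i) = 0)
    (f f' : R3) : phiFun g (f * f') = phiFun g f * phiFun g f' := by
  apply MvPowerSeries.ext; intro n
  classical
  set d := deg n + 1 with hdd
  have hd : deg n < d := by omega
  rw [coeff_phiFun_eq hg _ hd, MvPowerSeries.coeff_mul]
  have step1 : coeff n (MvPolynomial.aeval g (truncD d (f * f')))
      = coeff n (MvPolynomial.aeval g (truncD d f * truncD d f')) := by
    rw [coeff_aeval hg _ hd, coeff_aeval hg _ hd]
    refine Finset.sum_congr rfl ?_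
    intro m hm
    rw [mem_DFin] at hm
    rw [truncD_mul f f' m hm]
  rw [step1, map_mul, MvPowerSeries.coeff_mul]
  refine Finset.sum_congr rfl ?_
  rintro ⟨i, j⟩ hij
  have hij' : i + j = n := Finset.HasAntidiagonal.mem_antidiagonal.mp hij
  have hi : deg i < d := by
    have := deg_add i j; rw [hij'] at this; omega
  have hj : deg j < d := by
    have := deg_add i j; rw [hij'] at this; omega
  rw [coeff_phiFun_eq hg f hi, coeff_phiFun_eq hg f' hj]

/-- The substitution algebra homomorphism. -/
def Phi (g : Fin 3 → R3) (hg : ∀ i, constantCoeff (g i) = 0) : R3 →ₐ[ℂ] R3 where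
  toFun := phiFun g
  map_one' := phiFun_one g
  map_mul' := phiFun_mul hg
  map_zero' := by
    apply MvPowerSeries.ext; intro n
    simp [coeff_phiFun]
  map_add' := phiFun_add g
  commutes' := fun c => phiFun_C g c

@[simp] lemma Phi_apply (g : Fin 3 → R3) (hg) (f : R3) : Phi g hg f = phiFun g f := rfl

lemma Phi_coe (g : Fin 3 → R3) (hg) (p : MvPolynomial (Fin 3) ℂ) :
    Phi g hg (↑p : R3) = MvPolynomial.aeval g p := by
  apply MvPowerSeries.ext; intro n
  rw [Phi_apply, coeff_phiFun_eq hg _ (show deg n < deg n + 1 by omega),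
    coeff_aeval hg _ (show deg n < deg n + 1 by omega),
    coeff_aeval hg _ (show deg n < deg n + 1 by omega)]
  refine Finset.sum_congr rfl ?_
  intro m hm
  rw [mem_DFin] at hm
  rw [coeff_truncD, if_pos hm, MvPolynomial.coeff_coe]

lemma Phi_X (g : Fin 3 → R3) (hg) (i : Fin 3) : Phi g hg (X i) = g i := by
  rw [show (X i : R3) = ((MvPolynomial.X i : MvPolynomial (Fin 3) ℂ) : R3) from
    (MvPolynomial.coe_X i).symm, Phi_coe, MvPolynomial.aeval_X]

lemma constantCoeff_phiFun {g : Fin 3 → R3} (f : R3) :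
    constantCoeff (phiFun g f) = constantCoeff f := by
  rw [← coeff_zero_eq_constantCoeff_apply, ← coeff_zero_eq_constantCoeff_apply]
  rw [coeff_phiFun, deg_zero, DFin_one]
  simp [Pg_zero]

lemma phiFun_X_id (f : R3) : phiFun (fun i => (X i : R3)) f = f := by
  apply MvPowerSeries.ext; intro n
  classical
  rw [coeff_phiFun]
  simp only [Pg_X, coeff_monomial]
  rw [Finset.sum_eq_single n]
  · rw [if_pos rfl, mul_one]
  · intro m _ hmn
    rw [if_neg (fun h => hmn h.symm), mul_zero]
  · intro h
    exact absurd (mem_DFin.mpr (by omega)) h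

lemma phiFun_comp {g h : Fin 3 → R3} (hg : ∀ i, constantCoeff (g i) = 0)
    (hh : ∀ i, constantCoeff (h i) = 0) (f : R3) :
    phiFun g (phiFun h f) = phiFun (fun i => phiFun g (h i)) f := by
  have hk : ∀ i, constantCoeff (phiFun g (h i)) = 0 := fun i => by
    rw [constantCoeff_phiFun, hh i]
  apply MvPowerSeries.ext; intro n
  set d := deg n + 1 with hdd
  have hd : deg n < d := by omega
  rw [coeff_phiFun_eq hg _ hd]
  have htr : truncD d (phiFun h f) = truncD d (MvPolynomial.aeval h (truncD d f)) := by
    apply MvPolynomial.ext; intro m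
    rw [coeff_truncD, coeff_truncD]
    by_cases hm : deg m < d
    · rw [if_pos hm, if_pos hm, coeff_phiFun_eq hh f hm]
    · rw [if_neg hm, if_neg hm]
  rw [htr, ← coeff_phiFun_eq hg _ hd]
  have : phiFun g (MvPolynomial.aeval h (truncD d f))
      = MvPolynomial.aeval (fun i => phiFun g (h i)) (truncD d f) := by
    have := MvPolynomial.comp_aeval_apply (Phi g hg) (truncD d f) (f := h)
    simpa using this
  rw [this, ← coeff_phiFun_eq hk f hd]


section Unipotent

lemma ordGe_X (i : Fin 3) : OrdGe 1 (X i : R3) :=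
  ordGe_one (constantCoeff_X i)

/-- powers of a unipotent substitution differ from powers of `X` in high order -/
lemma pow_unip {g : Fin 3 → R3} (hg : ∀ i, constantCoeff (g i) = 0)
    (hr : ∀ i, OrdGe 2 (g i - X i)) (i : Fin 3) (b : ℕ) :
    OrdGe (b + 1) (g i ^ b - (X i : R3) ^ b) := by
  induction b with
  | zero => intro n _; simp
  | succ b ih =>
      have key : g i ^ (b + 1) - (X i : R3) ^ (b + 1)
          = (g i - X i) * g i ^ b + (X i : R3) * (g i ^ b - X i ^ b) := by ring
      rw [key]
      have hgb : OrdGe b (g i ^ b) := (ordGe_one (hg i)).pow b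
      have h1 : OrdGe (b + 1 + 1) ((g i - X i) * g i ^ b) :=
        ((hr i).mul hgb).mono (by omega)
      have h2 : OrdGe (b + 1 + 1) ((X i : R3) * (g i ^ b - X i ^ b)) :=
        ((ordGe_X i).mul ih).mono (by omega)
      exact h1.add h2

lemma monomial_split (a : Fin 3) (b : ℕ) (f : Fin 3 →₀ ℕ) :
    (monomial (Finsupp.single a b + f) (1 : ℂ) : R3)
      = (X a : R3) ^ b * monomial f 1 := by
  rw [X_pow_eq, monomial_mul_monomial, one_mul]

lemma coeff_Pg_unip {g : Fin 3 → R3} (hg : ∀ i, constantCoeff (g i) = 0)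
    (hr : ∀ i, OrdGe 2 (g i - X i)) :
    ∀ (m : Fin 3 →₀ ℕ), ∀ n, deg n ≤ deg m →
    coeff n (Pg g m) = coeff n (monomial m 1) := by
  intro m
  induction m using Finsupp.induction with
  | zero => intro n _; rw [Pg_zero]; simp
  | single_add a b f _ _ ih =>
      intro n hn
      rw [deg_add, deg_single] at hn
      have key : Pg g (Finsupp.single a b + f) - monomial (Finsupp.single a b + f) 1
          = (X a : R3) ^ b * (Pg g f - monomial f 1)
            + (g a ^ b - (X a : R3) ^ b) * Pg g f := by
        rw [Pg_add, Pg_single, monomial_split]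
        ring
      have h2 : coeff n ((g a ^ b - (X a : R3) ^ b) * Pg g f) = 0 :=
        ((pow_unip hg hr a b).mul (ordGe_Pg hg f)) n (by omega)
      have h1 : coeff n ((X a : R3) ^ b * (Pg g f - monomial f 1)) = 0 := by
        rw [X_pow_eq, coeff_monomial_mul]
        by_cases hle : Finsupp.single a b ≤ n
        · rw [if_pos hle, one_mul, map_sub]
          have hb : b ≤ n a := by simpa using Finsupp.le_def.mp hle a
          have hna : n a ≤ deg n := le_deg n a
          have hdeg : deg (n - Finsupp.single a b) ≤ deg f := by
            rw [deg_tsub hle, deg_single]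
            omega
          rw [ih (n - Finsupp.single a b) hdeg, sub_self]
        · rw [if_neg hle]
      have hz : coeff n (Pg g (Finsupp.single a b + f)
          - monomial (Finsupp.single a b + f) 1) = 0 := by
        rw [key, map_add, h1, h2, add_zero]
      rw [map_sub] at hz
      exact sub_eq_zero.mp hz

/-- triangularity of a unipotent substitution -/
lemma phiFun_triangular {g : Fin 3 → R3} (hg : ∀ i, constantCoeff (g i) = 0)
    (hr : ∀ i, OrdGe 2 (g i - X i)) (f : R3) (n : Fin 3 →₀ ℕ) :
    coeff n (phiFun g f)
      = coeff n f + ∑ m ∈ DFin (deg n), coeff m f * coeff n (Pg g m) := by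
  classical
  rw [coeff_phiFun]
  have hsub : DFin (deg n) ⊆ DFin (deg n + 1) := DFin_mono (by omega)
  rw [← Finset.sum_sdiff hsub]
  congr 1
  rw [Finset.sum_eq_single n]
  · rw [coeff_Pg_unip hg hr n n (le_refl _), coeff_monomial_same, mul_one]
  · intro m hm hmn
    rw [Finset.mem_sdiff, mem_DFin, mem_DFin] at hm
    have hdm : deg m = deg n := by omega
    rw [coeff_Pg_unip hg hr m n (by omega), coeff_monomial, if_neg (fun h => hmn (by rw [h])),
      mul_zero]
  · intro hn
    rw [Finset.mem_sdiff, mem_DFin, mem_DFin] at hn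
    omega

lemma phiFun_injective {g : Fin 3 → R3} (hg : ∀ i, constantCoeff (g i) = 0)
    (hr : ∀ i, OrdGe 2 (g i - X i)) : Function.Injective (phiFun g) := by
  have hker : ∀ f : R3, phiFun g f = 0 → f = 0 := by
    intro f hf
    have H : ∀ d, ∀ n : Fin 3 →₀ ℕ, deg n ≤ d → coeff n f = 0 := by
      intro d
      induction d using Nat.strong_induction_on with
      | _ d ih =>
          intro n hn
          have h0 : coeff n (phiFun g f) = 0 := by rw [hf, map_zero]
          rw [phiFun_triangular hg hr] at h0
          have hzero : ∀ m ∈ DFin (deg n), coeff m f * coeff n (Pg g m) = 0 := by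
            intro m hm
            rw [mem_DFin] at hm
            rw [ih (deg m) (by omega) m (le_refl _), zero_mul]
          rw [Finset.sum_eq_zero hzero, add_zero] at h0
          exact h0
    apply MvPowerSeries.ext
    intro n
    rw [map_zero]
    exact H (deg n) n (le_refl _)
  intro f f' hff
  have : phiFun g (f - f') = 0 := by
    have hsub : phiFun g (f - f') = phiFun g f - phiFun g f' := map_sub (Phi g hg) f f'
    rw [hsub, hff, sub_self]
  have := hker _ this
  exact sub_eq_zero.mp this

section Surj

variable {g : Fin 3 → R3}

/-- exponents of total degree exactly `d` -/
def EFin (d : ℕ) : Finset (Fin 3 →₀ ℕ) := DFin (d + 1) \ DFin d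

lemma mem_EFin {d : ℕ} {m : Fin 3 →₀ ℕ} : m ∈ EFin d ↔ deg m = d := by
  rw [EFin, Finset.mem_sdiff, mem_DFin, mem_DFin]
  omega

variable (g) (T : R3)

/-- successive polynomial approximations to a preimage of `T` -/
def approx : ℕ → MvPolynomial (Fin 3) ℂ
  | 0 => 0
  | d + 1 => approx d + ∑ m ∈ EFin d,
      MvPolynomial.monomial m (coeff m T - coeff m (phiFun g ((approx d : MvPolynomial (Fin 3) ℂ) : R3)))

lemma coeff_sum_monomial (s : Finset (Fin 3 →₀ ℕ)) (h : (Fin 3 →₀ ℕ) → ℂ) (k : Fin 3 →₀ ℕ) :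
    (∑ m ∈ s, MvPolynomial.monomial m (h m)).coeff k = if k ∈ s then h k else 0 := by
  classical
  rw [MvPolynomial.coeff_sum]
  simp only [MvPolynomial.coeff_monomial]
  rw [Finset.sum_ite_eq' s k]

lemma approx_stable {d d' : ℕ} (h : d ≤ d') (m : Fin 3 →₀ ℕ) (hm : deg m < d) :
    (approx g T d').coeff m = (approx g T d).coeff m := by
  induction d' , h using Nat.le_induction with
  | base => rfl
  | succ d' hd' ih =>
      rw [approx, MvPolynomial.coeff_add, coeff_sum_monomial]
      rw [if_neg (by rw [mem_EFin]; omega), add_zero]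
      exact ih

/-- the candidate preimage -/
def fSurj : R3 := fun n => (approx g T (deg n + 1)).coeff n

lemma fSurj_coeff (n : Fin 3 →₀ ℕ) {d : ℕ} (hd : deg n < d) :
    coeff n (fSurj g T) = (approx g T d).coeff n := by
  rw [coeff_apply, fSurj, ← approx_stable g T (show deg n + 1 ≤ d by omega) n (by omega)]

end Surj

lemma phiFun_surj_invariant {g : Fin 3 → R3} (hg : ∀ i, constantCoeff (g i) = 0)
    (hr : ∀ i, OrdGe 2 (g i - X i)) (T : R3) :
    ∀ d n, deg n < d → coeff n (phiFun g ((approx g T d : MvPolynomial (Fin 3) ℂ) : R3)) = coeff n T := by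
  intro d
  induction d with
  | zero => intro n hn; omega
  | succ d ih =>
      intro n hn
      rw [approx]
      set corr : MvPolynomial (Fin 3) ℂ := ∑ m ∈ EFin d,
        MvPolynomial.monomial m (coeff m T - coeff m (phiFun g ((approx g T d : MvPolynomial (Fin 3) ℂ) : R3))) with hcorr
      have hadd : ((approx g T d + corr : MvPolynomial (Fin 3) ℂ) : R3)
          = ((approx g T d : MvPolynomial (Fin 3) ℂ) : R3) + (corr : R3) :=
        MvPolynomial.coe_add _ _
      have hphiadd : phiFun g (((approx g T d : MvPolynomial (Fin 3) ℂ) : R3) + (corr : R3))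
          = phiFun g ((approx g T d : MvPolynomial (Fin 3) ℂ) : R3) + phiFun g (corr : R3) :=
        phiFun_add g _ _
      rw [hadd, hphiadd, map_add]
      have hcorrcoeff : ∀ m : Fin 3 →₀ ℕ, coeff m (corr : R3)
          = if m ∈ EFin d then coeff m T - coeff m (phiFun g ((approx g T d : MvPolynomial (Fin 3) ℂ) : R3)) else 0 := by
        intro m
        rw [MvPolynomial.coeff_coe, hcorr, coeff_sum_monomial]
      by_cases hcase : deg n < d
      · have hz : coeff n (phiFun g (corr : R3)) = 0 := by
          rw [coeff_phiFun]
          refine Finset.sum_eq_zero ?_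
          intro m hm
          rw [mem_DFin] at hm
          rw [hcorrcoeff m, if_neg (by rw [mem_EFin]; omega), zero_mul]
        rw [hz, add_zero, ih n hcase]
      · have hdn : deg n = d := by omega
        have hcz : coeff n (phiFun g (corr : R3))
            = coeff n T - coeff n (phiFun g ((approx g T d : MvPolynomial (Fin 3) ℂ) : R3)) := by
          rw [phiFun_triangular hg hr]
          have hz2 : ∑ m ∈ DFin (deg n), coeff m (corr : R3) * coeff n (Pg g m) = 0 := by
            refine Finset.sum_eq_zero ?_
            intro m hm
            rw [mem_DFin] at hm
            rw [hcorrcoeff m, if_neg (by rw [mem_EFin]; omega), zero_mul]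
          rw [hz2, add_zero, hcorrcoeff n, if_pos (mem_EFin.mpr hdn)]
        rw [hcz]
        ring

lemma phiFun_surjective {g : Fin 3 → R3} (hg : ∀ i, constantCoeff (g i) = 0)
    (hr : ∀ i, OrdGe 2 (g i - X i)) : Function.Surjective (phiFun g) := by
  intro T
  refine ⟨fSurj g T, ?_⟩
  apply MvPowerSeries.ext
  intro n
  have hd : deg n < deg n + 1 := by omega
  have key : coeff n (phiFun g (fSurj g T))
      = coeff n (phiFun g ((approx g T (deg n + 1) : MvPolynomial (Fin 3) ℂ) : R3)) := by
    rw [coeff_phiFun, coeff_phiFun]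
    refine Finset.sum_congr rfl ?_
    intro m hm
    rw [mem_DFin] at hm
    rw [fSurj_coeff g T m hm, MvPolynomial.coeff_coe]
  rw [key, phiFun_surj_invariant hg hr T (deg n + 1) n hd]

end Unipotent

section Sqrt

/-- coefficients of the formal square root of `1+x` -/
def sq : ℕ → ℂ
  | 0 => 1
  | 1 => 1/2
  | (k+2) => -(∑ a ∈ (Finset.Ioo 0 (k+2)).attach,
      sq a.1 * sq (k + 2 - a.1)) / 2
  decreasing_by
  · exact (Finset.mem_Ioo.mp a.2).2
  · have := Finset.mem_Ioo.mp a.2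
    omega

lemma sq_conv (k : ℕ) : ∑ a ∈ Finset.range (k + 1), sq a * sq (k - a)
    = if k = 0 then 1 else if k = 1 then 1 else 0 := by
  match k with
  | 0 => simp [sq]
  | 1 => norm_num [sq, Finset.sum_range_succ]
  | (k+2) =>
      rw [if_neg (by omega), if_neg (by omega)]
      have hsplit : Finset.range (k + 3) = insert 0 (insert (k+2) (Finset.Ioo 0 (k+2))) := by
        ext a
        simp [Finset.mem_Ioo, Finset.mem_range]
        omega
      rw [hsplit, Finset.sum_insert (by simp [Finset.mem_Ioo]),
        Finset.sum_insert (by simp [Finset.mem_Ioo])]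
      have h0 : sq 0 * sq (k + 2 - 0) = sq (k+2) := by simp [sq]
      have h1 : sq (k+2) * sq (k + 2 - (k+2)) = sq (k+2) := by simp [sq]
      rw [h0, h1]
      have hrec : sq (k+2) = -(∑ a ∈ (Finset.Ioo 0 (k+2)).attach,
          sq a.1 * sq (k + 2 - a.1)) / 2 := by rw [sq]
      rw [← Finset.sum_attach (Finset.Ioo 0 (k+2)) (fun a => sq a * sq (k + 2 - a))]
      rw [hrec]
      ring

/-- the formal square root of `1 + X 0` -/
def S : R3 := fun n => if n 1 = 0 ∧ n 2 = 0 then sq (n 0) else 0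

lemma coeff_S (n : Fin 3 →₀ ℕ) :
    coeff n S = if n 1 = 0 ∧ n 2 = 0 then sq (n 0) else 0 := rfl

lemma constantCoeff_S : constantCoeff S = 1 := by
  rw [← coeff_zero_eq_constantCoeff_apply, coeff_S]
  simp [sq]

lemma S_single (i : Fin 3) (k : ℕ) : (Finsupp.single i k : Fin 3 →₀ ℕ) = Finsupp.single i k := rfl

lemma S_sq : S * S = 1 + X 0 := by
  classical
  apply MvPowerSeries.ext
  intro n
  rw [coeff_mul]
  by_cases hn : n 1 = 0 ∧ n 2 = 0
  · have hn' : n = Finsupp.single 0 (n 0) := by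
      ext i
      fin_cases i <;> simp [Finsupp.single_apply, hn.1, hn.2]
    rw [hn', Finsupp.antidiagonal_single, Finset.sum_map]
    have hterm : ∀ p : ℕ × ℕ, p ∈ Finset.HasAntidiagonal.antidiagonal (n 0) →
        coeff ((Function.Embedding.prodMap ⟨_, Finsupp.single_injective (0:Fin 3)⟩
            ⟨_, Finsupp.single_injective (0:Fin 3)⟩) p).1 S
          * coeff ((Function.Embedding.prodMap ⟨_, Finsupp.single_injective (0:Fin 3)⟩
            ⟨_, Finsupp.single_injective (0:Fin 3)⟩) p).2 S = sq p.1 * sq p.2 := by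
      rintro ⟨a, b⟩ _
      dsimp only [Function.Embedding.coe_prodMap, Function.Embedding.coeFn_mk, Prod.map_apply]
      rw [coeff_S, coeff_S]
      rw [if_pos ⟨Finsupp.single_eq_of_ne (by decide), Finsupp.single_eq_of_ne (by decide)⟩,
        if_pos ⟨Finsupp.single_eq_of_ne (by decide), Finsupp.single_eq_of_ne (by decide)⟩,
        Finsupp.single_eq_same, Finsupp.single_eq_same]
    rw [Finset.sum_congr rfl hterm]
    rw [show (∑ p ∈ Finset.HasAntidiagonal.antidiagonal (n 0), sq p.1 * sq p.2)
        = ∑ a ∈ Finset.range (n 0 + 1), sq a * sq (n 0 - a) by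
      rw [← Finset.Nat.sum_antidiagonal_eq_sum_range_succ (fun a b => sq a * sq b) (n 0)]]
    rw [sq_conv (n 0)]
    have hcoe : coeff (Finsupp.single (0:Fin 3) (n 0)) (1 + X 0 : R3)
        = (if n 0 = 0 then 1 else 0) + (if n 0 = 1 then 1 else 0) := by
      rw [map_add, coeff_one, coeff_X]
      congr 1
      · by_cases h0 : n 0 = 0
        · rw [if_pos (by rw [h0, Finsupp.single_zero]), if_pos h0]
        · rw [if_neg (fun h => h0 (by simpa using DFunLike.congr_fun h (0:Fin 3))), if_neg h0]
      · by_cases h1 : n 0 = 1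
        · rw [if_pos (by rw [h1]), if_pos h1]
        · rw [if_neg (fun h => h1 (by simpa using DFunLike.congr_fun h (0:Fin 3))), if_neg h1]
    rw [hcoe]
    split_ifs <;> first | omega | norm_num
  · have hz : ∀ p ∈ Finset.HasAntidiagonal.antidiagonal n, coeff p.1 S * coeff p.2 S = 0 := by
      rintro ⟨i, j⟩ hij
      dsimp only
      have hij' : i + j = n := Finset.HasAntidiagonal.mem_antidiagonal.mp hij
      rw [coeff_S, coeff_S]
      have h1 : i 1 + j 1 = n 1 := by rw [← hij']; rfl
      have h2 : i 2 + j 2 = n 2 := by rw [← hij']; rfl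
      by_cases hi : i 1 = 0 ∧ i 2 = 0
      · have hj : ¬ (j 1 = 0 ∧ j 2 = 0) := by omega
        rw [if_neg hj, mul_zero]
      · rw [if_neg hi, zero_mul]
    rw [Finset.sum_eq_zero hz, map_add, coeff_one]
    have hn0 : n ≠ 0 := by
      intro h
      rw [h] at hn
      simp at hn
    rw [if_neg hn0, coeff_X, if_neg (by
      intro h
      rw [h] at hn
      simp [Finsupp.single_apply] at hn)]
    ring

end Sqrt

section Equivs

/-- the linear change of variables `a = y - x`, `b = y + x` -/
def gL : Fin 3 → R3 := ![X 1 - X 0, X 1 + X 0, X 2]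

def hL : Fin 3 → R3 := ![(2⁻¹ : ℂ) • (X 1 - X 0), (2⁻¹ : ℂ) • (X 1 + X 0), X 2]

lemma hgL : ∀ i, constantCoeff (gL i) = 0 := by
  intro i
  fin_cases i <;> simp [gL]

lemma hhL : ∀ i, constantCoeff (hL i) = 0 := by
  intro i
  fin_cases i <;> simp [hL, smul_eq_C_mul]

lemma gLhL : (fun i => phiFun gL (hL i)) = fun i => (X i : R3) := by
  funext i
  fin_cases i
  · show Phi gL hgL ((2⁻¹ : ℂ) • (X 1 - X 0)) = X 0
    rw [map_smul, map_sub, Phi_X, Phi_X]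
    rw [show gL 1 = X 1 + X 0 from rfl, show gL 0 = X 1 - X 0 from rfl]
    rw [show (X 1 + X 0 : R3) - (X 1 - X 0) = (2:ℂ) • X 0 by
      rw [two_smul]; ring]
    rw [smul_smul]
    norm_num
  · show Phi gL hgL ((2⁻¹ : ℂ) • (X 1 + X 0)) = X 1
    rw [map_smul, map_add, Phi_X, Phi_X]
    rw [show gL 1 = X 1 + X 0 from rfl, show gL 0 = X 1 - X 0 from rfl]
    rw [show (X 1 + X 0 : R3) + (X 1 - X 0) = (2:ℂ) • X 1 by
      rw [two_smul]; ring]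
    rw [smul_smul]
    norm_num
  · show Phi gL hgL (X 2) = X 2
    rw [Phi_X]
    rfl

lemma hLgL : (fun i => phiFun hL (gL i)) = fun i => (X i : R3) := by
  funext i
  fin_cases i
  · show Phi hL hhL (X 1 - X 0) = X 0
    rw [map_sub, Phi_X, Phi_X]
    rw [show hL 1 = (2⁻¹ : ℂ) • (X 1 + X 0) from rfl, show hL 0 = (2⁻¹ : ℂ) • (X 1 - X 0) from rfl]
    rw [← smul_sub]
    rw [show (X 1 + X 0 : R3) - (X 1 - X 0) = (2:ℂ) • X 0 by rw [two_smul]; ring]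
    rw [smul_smul]
    norm_num
  · show Phi hL hhL (X 1 + X 0) = X 1
    rw [map_add, Phi_X, Phi_X]
    rw [show hL 1 = (2⁻¹ : ℂ) • (X 1 + X 0) from rfl, show hL 0 = (2⁻¹ : ℂ) • (X 1 - X 0) from rfl]
    rw [← smul_add]
    rw [show (X 1 + X 0 : R3) + (X 1 - X 0) = (2:ℂ) • X 1 by rw [two_smul]; ring]
    rw [smul_smul]
    norm_num
  · show Phi hL hhL (X 2) = X 2
    rw [Phi_X]
    rfl

/-- the linear automorphism -/
def EL : R3 ≃ₐ[ℂ] R3 :=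
  AlgEquiv.ofAlgHom (Phi gL hgL) (Phi hL hhL)
    (AlgHom.ext fun f => by
      show phiFun gL (phiFun hL f) = f
      rw [phiFun_comp hgL hhL, gLhL, phiFun_X_id])
    (AlgHom.ext fun f => by
      show phiFun hL (phiFun gL f) = f
      rw [phiFun_comp hhL hgL, hLgL, phiFun_X_id])

/-- the unipotent change of variables `x ↦ x·√(1+x)` -/
def gU : Fin 3 → R3 := ![X 0 * S, X 1, X 2]

lemma hgU : ∀ i, constantCoeff (gU i) = 0 := by
  intro i
  fin_cases i <;> simp [gU]

lemma hrU : ∀ i, OrdGe 2 (gU i - X i) := by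
  intro i
  fin_cases i
  · show OrdGe 2 (X 0 * S - X 0)
    have h1 : OrdGe 1 (S - 1) := ordGe_one (by rw [map_sub, constantCoeff_S, map_one, sub_self])
    have := (ordGe_X 0).mul h1
    rw [mul_sub, mul_one] at this
    exact this
  · show OrdGe 2 (X 1 - X 1)
    intro n _; simp
  · show OrdGe 2 (X 2 - X 2)
    intro n _; simp

/-- the unipotent automorphism -/
def EU : R3 ≃ₐ[ℂ] R3 :=
  AlgEquiv.ofBijective (Phi gU hgU) ⟨phiFun_injective hgU hrU, phiFun_surjective hgU hrU⟩

/-- the composed automorphism -/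
def EA : R3 ≃ₐ[ℂ] R3 := EL.trans EU

lemma EA_apply (f : R3) : EA f = phiFun gU (phiFun gL f) := rfl

lemma EA1 : EA (X 0 * X 1) = X 1 ^ 2 - X 0 ^ 3 - X 0 ^ 2 := by
  show Phi gU hgU (Phi gL hgL (X 0 * X 1)) = _
  rw [map_mul, Phi_X, Phi_X, show gL 0 = X 1 - X 0 from rfl, show gL 1 = X 1 + X 0 from rfl,
    map_mul, map_sub, map_add, Phi_X, Phi_X, show gU 0 = X 0 * S from rfl,
    show gU 1 = (X 1 : R3) from rfl]
  linear_combination (-(X 0 ^ 2 : R3)) * S_sq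

lemma EA2 : EA (X 1 * X 2) = (X 1 + X 0 * S) * X 2 := by
  show Phi gU hgU (Phi gL hgL (X 1 * X 2)) = _
  rw [map_mul, Phi_X, Phi_X, show gL 1 = X 1 + X 0 from rfl, show gL 2 = (X 2 : R3) from rfl,
    map_mul, map_add, Phi_X, Phi_X, Phi_X, show gU 0 = X 0 * S from rfl,
    show gU 1 = (X 1 : R3) from rfl, show gU 2 = (X 2 : R3) from rfl]

lemma EA3 : EA (X 2 * X 0) = X 2 * (X 1 - X 0 * S) := by
  show Phi gU hgU (Phi gL hgL (X 2 * X 0)) = _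
  rw [map_mul, Phi_X, Phi_X, show gL 0 = X 1 - X 0 from rfl, show gL 2 = (X 2 : R3) from rfl,
    map_mul, map_sub, Phi_X, Phi_X, Phi_X, show gU 0 = X 0 * S from rfl,
    show gU 1 = (X 1 : R3) from rfl, show gU 2 = (X 2 : R3) from rfl]

end Equivs

section Final

def I1 : Ideal R3 := Ideal.span {(X 1 : R3) ^ 2 - X 0 ^ 3 - X 0 ^ 2,
  2 * X 1 * X 2, (3 * X 0 ^ 2 + 2 * X 0) * X 2}

def I2 : Ideal R3 := Ideal.span {(X 0 : R3) * X 1, X 1 * X 2, X 2 * X 0}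

lemma hS0 : constantCoeff S ≠ 0 := by rw [constantCoeff_S]; norm_num

lemma hT0 : constantCoeff (3 * X 0 + 2 : R3) ≠ 0 := by
  rw [map_add, map_mul, map_ofNat, map_ofNat, constantCoeff_X]
  norm_num

lemma h20 : constantCoeff (2 : R3) ≠ 0 := by
  rw [map_ofNat]
  norm_num

lemma hSinv : S * S⁻¹ = 1 := MvPowerSeries.mul_inv_cancel _ hS0
lemma hTinv : (3 * X 0 + 2 : R3) * (3 * X 0 + 2 : R3)⁻¹ = 1 :=
  MvPowerSeries.mul_inv_cancel _ hT0
lemma h2inv : (2 : R3) * (2 : R3)⁻¹ = 1 := MvPowerSeries.mul_inv_cancel _ h20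

lemma map_I2 : Ideal.map (EA : R3 →+* R3) I2 = I1 := by
  rw [I2, Ideal.map_span]
  rw [Set.image_insert_eq, Set.image_insert_eq, Set.image_singleton]
  have e1 : (EA : R3 →+* R3) ((X 0 : R3) * X 1) = X 1 ^ 2 - X 0 ^ 3 - X 0 ^ 2 := EA1
  have e2 : (EA : R3 →+* R3) ((X 1 : R3) * X 2) = (X 1 + X 0 * S) * X 2 := EA2
  have e3 : (EA : R3 →+* R3) ((X 2 : R3) * X 0) = X 2 * (X 1 - X 0 * S) := EA3
  rw [e1, e2, e3, I1]
  set G1 : R3 := X 1 ^ 2 - X 0 ^ 3 - X 0 ^ 2 with hG1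
  set P2 : R3 := (X 1 + X 0 * S) * X 2 with hP2
  set P3 : R3 := X 2 * (X 1 - X 0 * S) with hP3
  set G2 : R3 := 2 * X 1 * X 2 with hG2
  set G3 : R3 := (3 * X 0 ^ 2 + 2 * X 0) * X 2 with hG3
  have mem1 : G1 ∈ ({G1, P2, P3} : Set R3) := Or.inl rfl
  have mem2 : P2 ∈ ({G1, P2, P3} : Set R3) := Or.inr (Or.inl rfl)
  have mem3 : P3 ∈ ({G1, P2, P3} : Set R3) := Or.inr (Or.inr rfl)
  have mem1' : G1 ∈ ({G1, G2, G3} : Set R3) := Or.inl rfl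
  have mem2' : G2 ∈ ({G1, G2, G3} : Set R3) := Or.inr (Or.inl rfl)
  have mem3' : G3 ∈ ({G1, G2, G3} : Set R3) := Or.inr (Or.inr rfl)
  apply le_antisymm
  · rw [Ideal.span_le]
    rintro x (rfl | rfl | rfl)
    · exact Ideal.subset_span mem1'
    · -- P2 = 2⁻¹ * G2 + (S * T⁻¹) * G3
      have hid : P2 = (2 : R3)⁻¹ * G2 + (S * (3 * X 0 + 2 : R3)⁻¹) * G3 := by
        rw [hP2, hG2, hG3]
        linear_combination (-(X 1 * X 2 : R3)) * h2inv + (-(X 0 * S * X 2)) * hTinv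
      rw [hid]
      exact Ideal.add_mem _ (Ideal.mul_mem_left _ _ (Ideal.subset_span mem2'))
        (Ideal.mul_mem_left _ _ (Ideal.subset_span mem3'))
    · have hid : P3 = (2 : R3)⁻¹ * G2 - (S * (3 * X 0 + 2 : R3)⁻¹) * G3 := by
        rw [hP3, hG2, hG3]
        linear_combination (-(X 1 * X 2 : R3)) * h2inv + (X 0 * S * X 2) * hTinv
      rw [hid]
      exact Ideal.sub_mem _ (Ideal.mul_mem_left _ _ (Ideal.subset_span mem2'))
        (Ideal.mul_mem_left _ _ (Ideal.subset_span mem3'))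
  · rw [Ideal.span_le]
    rintro x (rfl | rfl | rfl)
    · exact Ideal.subset_span mem1
    · have hid : G2 = P2 + P3 := by rw [hG2, hP2, hP3]; ring
      rw [hid]
      exact Ideal.add_mem _ (Ideal.subset_span mem2) (Ideal.subset_span mem3)
    · have hid : G3 = ((2:R3)⁻¹ * (3 * X 0 + 2) * S⁻¹) * P2
          - ((2:R3)⁻¹ * (3 * X 0 + 2) * S⁻¹) * P3 := by
        rw [hG3, hP2, hP3]
        linear_combination (-((3 * X 0 + 2 : R3) * X 0 * X 2)) * h2inv
          + (-((3 * X 0 + 2 : R3) * X 0 * X 2 * 2 * (2:R3)⁻¹)) * hSinv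
      rw [hid]
      exact Ideal.sub_mem _ (Ideal.mul_mem_left _ _ (Ideal.subset_span mem2))
        (Ideal.mul_mem_left _ _ (Ideal.subset_span mem3))

end Final

end NodalCrit

open NodalCrit in
/-- There is a `ℂ`-algebra isomorphism
`ℂ[[x, y, u]]/(y² - x³ - x², 2yu, (3x² + 2x)u) ≅ ℂ[[a, b, u]]/(ab, bu, ua)`
of complete local rings: the completed local ring at the origin of the critical locus of
`u(y² - x³ - x²)` is isomorphic to that of the critical locus of the super-potential `abu`. -/
theorem nodal_crit_iso_xyz_crit :
    Nonempty
      ((MvPowerSeries (Fin 3) ℂ ⧸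
          Ideal.span {(X 1 : MvPowerSeries (Fin 3) ℂ) ^ 2 - X 0 ^ 3 - X 0 ^ 2,
            2 * X 1 * X 2, (3 * X 0 ^ 2 + 2 * X 0) * X 2}) ≃ₐ[ℂ]
        (MvPowerSeries (Fin 3) ℂ ⧸
          Ideal.span {(X 0 : MvPowerSeries (Fin 3) ℂ) * X 1, X 1 * X 2, X 2 * X 0})) := by
  exact ⟨(Ideal.quotientEquivAlg I2 I1 EA map_I2.symm).symm⟩
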